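/- arXiv:1003.3471 — 2 statements merged into one kernel-verified Lean document; each statement's English description precedes it below -/
import Mathlib

section
/- Let I be a monomial ideal of S = K[x_1,…,x_n]. Then sdepth(I) ≤ sdepth(√I). -/
open MvPolynomial

variable {K : Type*} [Field K]

/-- The Stanley space `u·K[Z]`: the `K`-linear span of all `u * v` where `v` is a
monomial in the variables of `Z`. -/
noncomputable def stanleySpace {n : ℕ} (u : MvPolynomial (Fin n) K) (Z : Finset (Fin n)) :
    Submodule K (MvPolynomial (Fin n) K) :=
  Submodule.span K { w | ∃ d : Fin n →₀ ℕ, ↑d.support ⊆ (Z : Set (Fin n)) ∧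
    w = u * MvPolynomial.monomial d 1 }

/-- `u` is a monomial. -/
def IsMonomial {n : ℕ} (u : MvPolynomial (Fin n) K) : Prop :=
  ∃ d : Fin n →₀ ℕ, u = MvPolynomial.monomial d 1

/-- A monomial ideal: an ideal generated by monomials. -/
def IsMonomialIdeal {n : ℕ} (I : Ideal (MvPolynomial (Fin n) K)) : Prop :=
  ∃ G : Set (MvPolynomial (Fin n) K), (∀ u ∈ G, IsMonomial u) ∧ I = Ideal.span G

/-- `(u i, Z i)` is a Stanley decomposition of the ideal `I`:
`I = ⊕ᵢ uᵢ K[Zᵢ]` as `K`-vector spaces, with each `uᵢ` a monomial. -/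
def IsStanleyDecomp {n : ℕ} (I : Ideal (MvPolynomial (Fin n) K)) {s : ℕ}
    (u : Fin s → MvPolynomial (Fin n) K) (Z : Fin s → Finset (Fin n)) : Prop :=
  (∀ i, IsMonomial (u i)) ∧
  iSupIndep (fun i => stanleySpace (u i) (Z i)) ∧
  (⨆ i, stanleySpace (u i) (Z i)) = Submodule.restrictScalars K I

/-- The Stanley depth of a monomial ideal: the largest `k` such that there is a
Stanley decomposition all of whose Stanley spaces have dimension at least `k`. -/
noncomputable def sdepth {n : ℕ} (I : Ideal (MvPolynomial (Fin n) K)) : ℕ :=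
  sSup { k | ∃ (s : ℕ) (u : Fin s → MvPolynomial (Fin n) K) (Z : Fin s → Finset (Fin n)),
    IsStanleyDecomp I u Z ∧ ∀ i, k ≤ (Z i).card }

/-!
If `I = ⨁ᵢ x^{aᵢ} K[Zᵢ]`, then `√I` is spanned by the monomials `x^b` with `supp aᵢ ⊆ supp b`
for some `i`: such a monomial has a power divisible by `x^{aᵢ}`; conversely, if no `supp aᵢ` lies
in `supp b`, then `I`, hence `√I`, lies in the prime ideal generated by the variables outside
`supp b`, and no element of that ideal has `x^b` in its support. Choosing `N` larger than every
exponent of every `aᵢ`, the exponent `N • b` lies in `aᵢ + ℕ^{Zᵢ}` exactly when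
`supp aᵢ ⊆ supp b ⊆ Zᵢ`. Hence `√I = ⨁ x^{supp aᵢ} K[Zᵢ]`, the sum running over the `i` with
`supp aᵢ ⊆ Zᵢ`, and the new Stanley spaces have the same dimensions as the old ones.
-/

open Function

namespace MvPolynomial

variable {σ R : Type*}

section CommSemiring

variable [CommSemiring R]

theorem restrictSupport_iUnion {ι : Sort*} (s : ι → Set (σ →₀ ℕ)) :
    restrictSupport R (⋃ i, s i) = ⨆ i, restrictSupport R (s i) := by
  simp only [restrictSupport_eq_span, Set.image_iUnion, Submodule.span_iUnion]

theorem disjoint_restrictSupport_iff [Nontrivial R] {s t : Set (σ →₀ ℕ)} :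
    Disjoint (restrictSupport R s) (restrictSupport R t) ↔ Disjoint s t := by
  refine ⟨fun h => Set.disjoint_left.2 fun b hs ht => ?_, fun h => ?_⟩
  · have := Submodule.disjoint_def.1 h (monomial b (1 : R)) (by simp [hs]) (by simp [ht])
    simp at this
  · refine Submodule.disjoint_def.2 fun p hs ht => ?_
    rw [mem_restrictSupport_iff] at hs ht
    simpa using Set.subset_empty_iff.1 ((Set.subset_inter hs ht).trans h.inter_eq.subset)

theorem iSupIndep_restrictSupport_iff [Nontrivial R] {ι : Type*} {s : ι → Set (σ →₀ ℕ)} :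
    iSupIndep (fun i => restrictSupport R (s i)) ↔ Pairwise (Disjoint on s) := by
  simp only [iSupIndep_def, ← restrictSupport_iUnion, disjoint_restrictSupport_iff]
  rw [← iSupIndep_iff_pairwiseDisjoint, iSupIndep_def]
  rfl

open scoped Classical in
theorem aeval_indicator_compl_monomial (s : Set σ) (e : σ →₀ ℕ) (r : R) :
    aeval ((sᶜ).indicator X) (monomial e r) =
      if Disjoint ↑e.support s then monomial e r else 0 := by
  rw [aeval_monomial, Finsupp.prod]
  split_ifs with h
  · rw [Finset.prod_congr rfl fun j hj => by rw [Set.indicator_of_mem (h.notMem_of_mem_left hj)],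
      prod_X_pow_eq_monomial, algebraMap_eq, C_mul_monomial, mul_one]
  · obtain ⟨j, hje, hjs⟩ := Set.not_disjoint_iff.1 h
    have hXj : (sᶜ).indicator X j ^ e j = (0 : MvPolynomial σ R) := by
      rw [Set.indicator_of_notMem (by simpa using hjs), zero_pow (Finsupp.mem_support_iff.1 hje)]
    rw [Finset.prod_eq_zero hje hXj, mul_zero]

open scoped Classical in
theorem coeff_aeval_indicator_compl (s : Set σ) (p : MvPolynomial σ R) (c : σ →₀ ℕ) :
    coeff c (aeval ((sᶜ).indicator X) p) = if Disjoint ↑c.support s then coeff c p else 0 := by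
  induction p using MvPolynomial.induction_on' with
  | monomial e r =>
    rw [aeval_indicator_compl_monomial]
    by_cases hce : c = e
    · subst hce; split_ifs <;> simp
    · split_ifs <;> simp [coeff_monomial, Ne.symm hce]
  | add p q hp hq => simp only [map_add, coeff_add, hp, hq]; split_ifs <;> simp

theorem ker_aeval_indicator_compl (s : Set σ) :
    RingHom.ker (aeval ((sᶜ).indicator X) : MvPolynomial σ R →ₐ[R] MvPolynomial σ R) =
      Ideal.span (X '' s) := by
  classical
  ext p
  rw [RingHom.mem_ker, mem_ideal_span_X_image, MvPolynomial.ext_iff]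
  simp only [coeff_aeval_indicator_compl, coeff_zero, ite_eq_right_iff]
  refine forall_congr' fun m => ?_
  rw [mem_support_iff, not_imp_comm]
  simp [Set.disjoint_right]

end CommSemiring

theorem isPrime_span_X_image [CommRing R] [IsDomain R] (s : Set σ) :
    (Ideal.span (X '' s : Set (MvPolynomial σ R))).IsPrime := by
  rw [← ker_aeval_indicator_compl]
  exact RingHom.ker_isPrime _

end MvPolynomial

section stanleyExponents

variable {σ : Type*}

def stanleyExponents (a : σ →₀ ℕ) (Z : Set σ) : Set (σ →₀ ℕ) :=
  {b | a ≤ b ∧ ∀ j ∉ Z, b j = a j}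

noncomputable def radicalExponent (a : σ →₀ ℕ) : σ →₀ ℕ :=
  Finsupp.mapRange (fun k => min k 1) (Nat.zero_min 1) a

theorem exists_forall_apply_lt {ι : Type*} [Finite ι] (a : ι → σ →₀ ℕ) :
    ∃ N, ∀ i j, a i j < N := by
  obtain ⟨M, hM⟩ := Finite.bddAbove_range fun i => (a i).degree
  exact ⟨M + 1, fun i j => Nat.lt_succ_of_le ((Finsupp.le_degree j (a i)).trans (hM ⟨i, rfl⟩))⟩

theorem le_smul_of_support_subset {a b : σ →₀ ℕ} {N : ℕ} (hN : ∀ j, a j < N)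
    (h : a.support ⊆ b.support) : a ≤ N • b := by
  intro j
  by_cases hj : a j = 0
  · simp [hj]
  · have hb : b j ≠ 0 := Finsupp.mem_support_iff.1 (h (Finsupp.mem_support_iff.2 hj))
    have := hN j
    simp only [Finsupp.smul_apply, smul_eq_mul]
    nlinarith [Nat.one_le_iff_ne_zero.2 hb]

theorem smul_mem_stanleyExponents_iff {a b : σ →₀ ℕ} {Z : Set σ} {N : ℕ} (hN : ∀ j, a j < N) :
    N • b ∈ stanleyExponents a Z ↔ a.support ⊆ b.support ∧ ↑b.support ⊆ Z := by
  constructor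
  · rintro ⟨hle, hZ⟩
    refine ⟨(Finsupp.support_mono hle).trans Finsupp.support_smul, fun j hj => ?_⟩
    by_contra hjZ
    have hb : b j ≠ 0 := Finsupp.mem_support_iff.1 hj
    have hNj := hN j
    have := hZ j hjZ
    simp only [Finsupp.smul_apply, smul_eq_mul] at this
    nlinarith [Nat.one_le_iff_ne_zero.2 hb]
  · rintro ⟨ha, hb⟩
    refine ⟨le_smul_of_support_subset hN ha, fun j hj => ?_⟩
    have hbj : b j = 0 := Finsupp.notMem_support_iff.1 fun h => hj (hb h)
    have haj : a j = 0 := Finsupp.notMem_support_iff.1 fun h => hj (hb (ha h))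
    simp [hbj, haj]

theorem mem_stanleyExponents_radicalExponent {a b : σ →₀ ℕ} {Z : Set σ} (ha : ↑a.support ⊆ Z) :
    b ∈ stanleyExponents (radicalExponent a) Z ↔ a.support ⊆ b.support ∧ ↑b.support ⊆ Z := by
  have haZ : ∀ j ∉ Z, a j = 0 := fun j hj => Finsupp.notMem_support_iff.1 fun h => hj (ha h)
  simp only [stanleyExponents, radicalExponent, Set.mem_ofPred_eq, Finsupp.le_def,
    Finsupp.mapRange_apply, Finset.subset_iff, Set.subset_def, Finset.mem_coe,
    Finsupp.mem_support_iff]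
  constructor
  · rintro ⟨hle, hZ⟩
    refine ⟨fun j hj => by have := hle j; omega, fun j hj => ?_⟩
    by_contra hjZ
    have := hZ j hjZ
    simp [haZ j hjZ] at this
    exact hj this
  · rintro ⟨hab, hb⟩
    refine ⟨fun j => ?_, fun j hj => ?_⟩
    · by_cases h : a j = 0
      · simp [h]
      · have := hab h; omega
    · have : b j = 0 := by by_contra h; exact hj (hb j h)
      simp [this, haZ j hj]

end stanleyExponents

section monomialIdeal

variable {R σ ι : Type*} {a : ι → σ →₀ ℕ} {Z : ι → Set σ}

section CommSemiring

variable [CommSemiring R] [Nontrivial R] {I : Ideal (MvPolynomial σ R)}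

theorem monomial_mem_iff_of_restrictScalars_eq
    (hI : I.restrictScalars R = restrictSupport R (⋃ i, stanleyExponents (a i) (Z i)))
    {b : σ →₀ ℕ} :
    monomial b (1 : R) ∈ I ↔ ∃ i, b ∈ stanleyExponents (a i) (Z i) := by
  rw [← Submodule.restrictScalars_mem R, hI, monomial_mem_restrictSupport]
  simp

theorem monomial_smul_mem_of_support_subset
    (hI : I.restrictScalars R = restrictSupport R (⋃ i, stanleyExponents (a i) (Z i)))
    {i : ι} {b : σ →₀ ℕ} {N : ℕ} (hN : ∀ j, a i j < N) (h : (a i).support ⊆ b.support) :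
    monomial (N • b) (1 : R) ∈ I :=
  I.mem_of_dvd (monomial_dvd_monomial.2 ⟨Or.inr (le_smul_of_support_subset hN h), one_dvd _⟩)
    ((monomial_mem_iff_of_restrictScalars_eq hI).2 ⟨i, le_rfl, fun _ _ => rfl⟩)

theorem setOf_exists_support_subset_eq
    (hI : I.restrictScalars R = restrictSupport R (⋃ i, stanleyExponents (a i) (Z i)))
    {N : ℕ} (hN : ∀ i j, a i j < N) :
    {b | ∃ i, (a i).support ⊆ b.support} =
      ⋃ i : {i // ↑(a i).support ⊆ Z i}, stanleyExponents (radicalExponent (a i)) (Z i) := by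
  ext b
  simp only [Set.mem_ofPred_eq, Set.mem_iUnion, Subtype.exists]
  constructor
  · rintro ⟨i₀, hi₀⟩
    obtain ⟨i, hi⟩ := (monomial_mem_iff_of_restrictScalars_eq hI).1
      (monomial_smul_mem_of_support_subset hI (hN i₀) hi₀)
    obtain ⟨ha, hb⟩ := (smul_mem_stanleyExponents_iff (hN i)).1 hi
    have hgood : ↑(a i).support ⊆ Z i := (Finset.coe_subset.2 ha).trans hb
    exact ⟨i, hgood, (mem_stanleyExponents_radicalExponent hgood).2 ⟨ha, hb⟩⟩
  · rintro ⟨i, hi, hb⟩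
    exact ⟨i, ((mem_stanleyExponents_radicalExponent hi).1 hb).1⟩

end CommSemiring

theorem pairwise_disjoint_stanleyExponents_radicalExponent
    (hdisj : Pairwise (Disjoint on fun i => stanleyExponents (a i) (Z i)))
    {N : ℕ} (hN : ∀ i j, a i j < N) :
    Pairwise (Disjoint on
      fun i : {i // ↑(a i).support ⊆ Z i} => stanleyExponents (radicalExponent (a i)) (Z i)) := by
  intro i j hij
  refine Set.disjoint_left.2 fun b hbi hbj => ?_
  rw [mem_stanleyExponents_radicalExponent i.2, ← smul_mem_stanleyExponents_iff (hN i)] at hbi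
  rw [mem_stanleyExponents_radicalExponent j.2, ← smul_mem_stanleyExponents_iff (hN j)] at hbj
  exact Set.disjoint_left.1 (hdisj (Subtype.coe_injective.ne hij)) hbi hbj

variable [CommRing R] [IsDomain R] {I : Ideal (MvPolynomial σ R)}

theorem exists_support_subset_of_mem_radical
    (hI : I.restrictScalars R = restrictSupport R (⋃ i, stanleyExponents (a i) (Z i)))
    {p : MvPolynomial σ R} (hp : p ∈ I.radical) {c : σ →₀ ℕ} (hc : c ∈ p.support) :
    ∃ i, (a i).support ⊆ c.support := by
  by_contra! h
  have hle : I ≤ Ideal.span (X '' (↑c.support)ᶜ) := by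
    intro q hq
    rw [← Submodule.restrictScalars_mem R, hI, mem_restrictSupport_iff] at hq
    refine mem_ideal_span_X_image.2 fun e he => ?_
    obtain ⟨i, hai, -⟩ := Set.mem_iUnion.1 (hq he)
    obtain ⟨j, hj, hjc⟩ := Finset.not_subset.1 (h i)
    exact ⟨j, hjc, Finsupp.mem_support_iff.1 (Finsupp.support_mono hai hj)⟩
  obtain ⟨j, hj, hcj⟩ :=
    mem_ideal_span_X_image.1 ((isPrime_span_X_image _).radical_le_iff.2 hle hp) c hc
  exact hj (Finsupp.mem_support_iff.2 hcj)

theorem radical_restrictScalars_eq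
    (hI : I.restrictScalars R = restrictSupport R (⋃ i, stanleyExponents (a i) (Z i))) :
    I.radical.restrictScalars R = restrictSupport R {b | ∃ i, (a i).support ⊆ b.support} := by
  refine le_antisymm (fun p hp c hc => exists_support_subset_of_mem_radical hI hp hc) ?_
  rw [restrictSupport_eq_span, Submodule.span_le]
  rintro _ ⟨b, ⟨i, hi⟩, rfl⟩
  refine ⟨(a i).degree + 1, ?_⟩
  rw [monomial_pow, one_pow]
  exact monomial_smul_mem_of_support_subset hI
    (fun j => Nat.lt_succ_of_le (Finsupp.le_degree j _)) hi

end monomialIdeal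

section stanleyDecomposition

variable {n : ℕ}

theorem stanleySpace_monomial (a : Fin n →₀ ℕ) (Z : Finset (Fin n)) :
    stanleySpace (monomial a (1 : K)) Z = restrictSupport K (stanleyExponents a Z) := by
  rw [stanleySpace, restrictSupport_eq_span]
  congr 1
  ext w
  constructor
  · rintro ⟨d, hd, rfl⟩
    refine ⟨a + d, ⟨le_self_add, fun j hj => ?_⟩, by rw [monomial_mul, one_mul]⟩
    simp [Finsupp.notMem_support_iff.1 fun h => hj (hd h)]
  · rintro ⟨b, ⟨hab, hZ⟩, rfl⟩
    refine ⟨b - a, fun j hj => ?_, by rw [monomial_mul, one_mul, add_tsub_cancel_of_le hab]⟩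
    by_contra hjZ
    simp [hZ j hjZ] at hj

theorem isStanleyDecomp_monomial_iff {I : Ideal (MvPolynomial (Fin n) K)} {s : ℕ}
    {a : Fin s → Fin n →₀ ℕ} {Z : Fin s → Finset (Fin n)} :
    IsStanleyDecomp I (fun i => monomial (a i) 1) Z ↔
      Pairwise (Disjoint on fun i => stanleyExponents (a i) (Z i)) ∧
        I.restrictScalars K = restrictSupport K (⋃ i, stanleyExponents (a i) (Z i)) := by
  simp only [IsStanleyDecomp, stanleySpace_monomial, iSupIndep_restrictSupport_iff,
    ← restrictSupport_iUnion, eq_comm (b := I.restrictScalars K)]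
  exact and_iff_right fun i => ⟨a i, rfl⟩

theorem exists_isStanleyDecomp_of_restrictScalars_eq {J : Ideal (MvPolynomial (Fin n) K)}
    {ι : Type*} [Fintype ι] {b : ι → Fin n →₀ ℕ} {Z : ι → Finset (Fin n)}
    (hdisj : Pairwise (Disjoint on fun i => stanleyExponents (b i) (Z i)))
    (hJ : J.restrictScalars K = restrictSupport K (⋃ i, stanleyExponents (b i) (Z i))) :
    ∃ (s : ℕ) (u : Fin s → MvPolynomial (Fin n) K) (Z' : Fin s → Finset (Fin n)),
      IsStanleyDecomp J u Z' ∧ ∀ l, ∃ i, Z' l = Z i := by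
  let e := (Fintype.equivFin ι).symm
  refine ⟨_, fun l => monomial (b (e l)) 1, fun l => Z (e l), isStanleyDecomp_monomial_iff.2
    ⟨hdisj.comp_of_injective e.injective, ?_⟩, fun l => ⟨e l, rfl⟩⟩
  rw [hJ, e.surjective.iUnion_comp fun i => stanleyExponents (b i) (Z i)]

theorem IsStanleyDecomp.exists_radical {I : Ideal (MvPolynomial (Fin n) K)} {s : ℕ}
    {u : Fin s → MvPolynomial (Fin n) K} {Z : Fin s → Finset (Fin n)}
    (hd : IsStanleyDecomp I u Z) :
    ∃ (s' : ℕ) (u' : Fin s' → MvPolynomial (Fin n) K) (Z' : Fin s' → Finset (Fin n)),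
      IsStanleyDecomp I.radical u' Z' ∧ ∀ l, ∃ i, Z' l = Z i := by
  classical
  choose a ha using hd.1
  obtain rfl : u = fun i => monomial (a i) 1 := funext ha
  obtain ⟨hdisj, hI⟩ := isStanleyDecomp_monomial_iff.1 hd
  obtain ⟨N, hN⟩ := exists_forall_apply_lt a
  obtain ⟨s', u', Z', hd', hZ'⟩ := exists_isStanleyDecomp_of_restrictScalars_eq
    (Z := fun i : {i // ↑(a i).support ⊆ (Z i : Set (Fin n))} => Z i)
    (pairwise_disjoint_stanleyExponents_radicalExponent hdisj hN)
    (by rw [radical_restrictScalars_eq hI, setOf_exists_support_subset_eq hI hN])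
  exact ⟨s', u', Z', hd', fun l => (hZ' l).imp' Subtype.val fun _ h => h⟩

theorem IsStanleyDecomp.pos_of_ne_bot {J : Ideal (MvPolynomial (Fin n) K)} {s : ℕ}
    {u : Fin s → MvPolynomial (Fin n) K} {Z : Fin s → Finset (Fin n)}
    (hd : IsStanleyDecomp J u Z) (hJ : J ≠ ⊥) : 0 < s := by
  refine Nat.pos_of_ne_zero fun hs => hJ ?_
  subst hs
  have := hd.2.2
  rw [iSup_of_empty] at this
  exact (Submodule.restrictScalars_eq_bot_iff _ _ _).1 this.symm

theorem sdepth_le_sdepth_of_forall_isStanleyDecomp {I J : Ideal (MvPolynomial (Fin n) K)}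
    (hJ : J ≠ ⊥)
    (h : ∀ (s : ℕ) (u : Fin s → MvPolynomial (Fin n) K) (Z : Fin s → Finset (Fin n)),
      IsStanleyDecomp I u Z →
      ∃ (s' : ℕ) (u' : Fin s' → MvPolynomial (Fin n) K) (Z' : Fin s' → Finset (Fin n)),
        IsStanleyDecomp J u' Z' ∧ ∀ l, ∃ i, Z' l = Z i) :
    sdepth I ≤ sdepth J := by
  refine csSup_le_csSup' ⟨n, ?_⟩ ?_
  · rintro k ⟨s, u, Z, hd, hk⟩
    exact (hk ⟨0, hd.pos_of_ne_bot hJ⟩).trans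
      ((Finset.card_le_univ _).trans_eq (Fintype.card_fin n))
  · rintro k ⟨s, u, Z, hd, hk⟩
    obtain ⟨s', u', Z', hd', hZ'⟩ := h s u Z hd
    refine ⟨s', u', Z', hd', fun l => ?_⟩
    obtain ⟨i, hi⟩ := hZ' l
    exact hi ▸ hk i

end stanleyDecomposition

theorem sdepth_le_sdepth_radical_general {n : ℕ} (I : Ideal (MvPolynomial (Fin n) K)) :
    sdepth I ≤ sdepth I.radical := by
  rcases eq_or_ne I.radical ⊥ with h | h
  · rw [le_antisymm (h.trans_le bot_le) I.le_radical]
  · exact sdepth_le_sdepth_of_forall_isStanleyDecomp h fun _ _ _ hd => hd.exists_radical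

/-- For a monomial ideal `I` of `S = K[x_1,…,x_n]`, `sdepth(I) ≤ sdepth(√I)`. -/
theorem sdepth_le_sdepth_radical {n : ℕ} (I : Ideal (MvPolynomial (Fin n) K))
    (hI : IsMonomialIdeal I) :
    sdepth I ≤ sdepth I.radical :=
  sdepth_le_sdepth_radical_general I
end

section
/- Let Q and Q' be monomial primary ideals of S = K[x_1,…,x_n] with √Q = (x_1,…,x_t) and √Q' = (x_1,…,x_n), where 1 ≤ t ≤ n. Then sdepth(Q ∩ Q') ≤ n − ⌊t/2⌋. -/
/-!
Fix a Stanley decomposition of `I = Q ∩ Q'` and, for each `j < t`, a power `x_j^{m_j} ∈ I`; it lies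
in a unique Stanley space `u_{i(j)} K[Z_{i(j)}]`. If `j ≠ j'` with `j' ∈ Z_{i(j)}` and
`j ∈ Z_{i(j')}`, then `x_j^{m_j} x_{j'}^{m_{j'}}` lies in both spaces, so `i(j) = i(j')` and
`u_{i(j)}` divides two coprime monomials, forcing `1 = u_{i(j)} ∈ I`. Hence `j' ∈ Z_{i(j)}` defines
an oriented graph on the first `t` variables; a vertex `j` of out-degree at most `(t - 1) / 2` gives
`|Z_{i(j)}| ≤ 1 + (t - 1) / 2 + (n - t) = n - ⌊t/2⌋`.
-/

open MvPolynomial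

variable {K : Type*} [Field K]

open Finset

namespace Finset

variable {α : Type*} [DecidableEq α]

theorem exists_two_mul_card_filter_le_of_asymm {T : Finset α} (hT : T.Nonempty)
    (R : α → α → Prop) [DecidableRel R] (hR : ∀ a ∈ T, ∀ c ∈ T, R a c → ¬ R c a) :
    ∃ a ∈ T, 2 * #{c ∈ T | R a c} ≤ #T - 1 := by
  refine exists_le_of_sum_le hT ?_
  have hpair : ∀ a ∈ T, ∀ c ∈ T,
      (if R a c then 1 else 0) + (if R c a then 1 else 0) ≤ if a ≠ c then 1 else 0 := by
    intro a ha c hc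
    by_cases hac : a = c
    · subst hac
      simp [show ¬ R a a from fun h => hR a ha a ha h h]
    · have := hR a ha c hc
      split_ifs <;> simp_all
  calc ∑ a ∈ T, 2 * #{c ∈ T | R a c}
      = ∑ a ∈ T, ∑ c ∈ T, ((if R a c then 1 else 0) + (if R c a then 1 else 0)) := by
        simp only [sum_add_distrib, ← mul_sum, card_filter]
        rw [sum_comm (f := fun c a => if R a c then 1 else 0), two_mul]
    _ ≤ ∑ a ∈ T, ∑ c ∈ T, if a ≠ c then 1 else 0 :=
        sum_le_sum fun a ha => sum_le_sum fun c hc => hpair a ha c hc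
    _ = ∑ a ∈ T, (#T - 1) := by
        refine sum_congr rfl fun a ha => ?_
        rw [← card_filter, filter_ne, card_erase_of_mem ha]

end Finset

theorem MvPolynomial.monomial_one_mem_span_image_iff {σ R : Type*} [CommSemiring R]
    [Nontrivial R] {S : Set (σ →₀ ℕ)} {e : σ →₀ ℕ} :
    monomial e (1 : R) ∈ Submodule.span R ((fun e => monomial e (1 : R)) '' S) ↔ e ∈ S :=
  (basisMonomials σ R).self_mem_span_image

variable {n : ℕ}

def stanleyCone (d : Fin n →₀ ℕ) (Z : Finset (Fin n)) : Set (Fin n →₀ ℕ) :=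
  {e | ∃ f : Fin n →₀ ℕ, ↑f.support ⊆ (Z : Set (Fin n)) ∧ d + f = e}

theorem le_of_mem_stanleyCone {d e : Fin n →₀ ℕ} {Z : Finset (Fin n)}
    (he : e ∈ stanleyCone d Z) : d ≤ e := by
  obtain ⟨f, -, rfl⟩ := he
  exact le_self_add

theorem zero_mem_stanleyCone_zero (Z : Finset (Fin n)) : 0 ∈ stanleyCone 0 Z :=
  ⟨0, by simp, rfl⟩

theorem add_single_mem_stanleyCone {d e : Fin n →₀ ℕ} {Z : Finset (Fin n)}
    (he : e ∈ stanleyCone d Z) {c : Fin n} (hc : c ∈ Z) (m : ℕ) :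
    e + Finsupp.single c m ∈ stanleyCone d Z := by
  classical
  obtain ⟨f, hf, rfl⟩ := he
  refine ⟨f + Finsupp.single c m, fun x hx => ?_, (add_assoc _ _ _).symm⟩
  rcases mem_union.mp (Finsupp.support_add hx) with hx | hx
  · exact hf hx
  · rwa [mem_singleton.mp (Finsupp.support_single_subset hx)]

theorem stanleySpace_monomial_s5 (d : Fin n →₀ ℕ) (Z : Finset (Fin n)) :
    stanleySpace (monomial d (1 : K)) Z =
      Submodule.span K ((fun e => monomial e (1 : K)) '' stanleyCone d Z) := by
  rw [stanleySpace]
  congr 1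
  ext w
  constructor
  · rintro ⟨f, hf, rfl⟩
    exact ⟨d + f, ⟨f, hf, rfl⟩, by rw [monomial_mul, one_mul]⟩
  · rintro ⟨e, ⟨f, hf, rfl⟩, rfl⟩
    exact ⟨f, hf, by rw [monomial_mul, one_mul]⟩

namespace IsStanleyDecomp

variable {I : Ideal (MvPolynomial (Fin n) K)} {s : ℕ} {d : Fin s → Fin n →₀ ℕ}
  {Z : Fin s → Finset (Fin n)}

theorem monomial_mem_iff (h : IsStanleyDecomp I (fun i => monomial (d i) (1 : K)) Z)
    (e : Fin n →₀ ℕ) : monomial e (1 : K) ∈ I ↔ ∃ i, e ∈ stanleyCone (d i) (Z i) := by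
  have hI : Submodule.restrictScalars K I =
      Submodule.span K ((fun e => monomial e (1 : K)) '' ⋃ i, stanleyCone (d i) (Z i)) := by
    rw [← h.2.2, Set.image_iUnion, Submodule.span_iUnion]
    exact iSup_congr fun i => stanleySpace_monomial_s5 (d i) (Z i)
  rw [← Submodule.restrictScalars_mem K, hI, monomial_one_mem_span_image_iff, Set.mem_iUnion]

theorem eq_of_mem_stanleyCone (h : IsStanleyDecomp I (fun i => monomial (d i) (1 : K)) Z)
    {e : Fin n →₀ ℕ} {i i' : Fin s} (he : e ∈ stanleyCone (d i) (Z i))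
    (he' : e ∈ stanleyCone (d i') (Z i')) : i = i' := by
  by_contra hne
  have hmem : ∀ {j}, e ∈ stanleyCone (d j) (Z j) →
      monomial e (1 : K) ∈ stanleySpace (monomial (d j) (1 : K)) (Z j) := fun hj => by
    rwa [stanleySpace_monomial_s5, monomial_one_mem_span_image_iff]
  have h0 := Submodule.disjoint_def.mp (h.2.1.pairwiseDisjoint hne) _ (hmem he) (hmem he')
  exact one_ne_zero (monomial_eq_zero.mp h0)

theorem notMem_of_single_mem_stanleyCone
    (h : IsStanleyDecomp I (fun i => monomial (d i) (1 : K)) Z) (hI : I ≠ ⊤)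
    {a c : Fin n} (hac : a ≠ c) {p q : ℕ} {i i' : Fin s}
    (ha : Finsupp.single a p ∈ stanleyCone (d i) (Z i))
    (hc : Finsupp.single c q ∈ stanleyCone (d i') (Z i')) (hcZ : c ∈ Z i) : a ∉ Z i' := by
  intro haZ
  have hi : i = i' := h.eq_of_mem_stanleyCone (add_single_mem_stanleyCone ha hcZ q)
    (add_comm (Finsupp.single c q) _ ▸ add_single_mem_stanleyCone hc haZ p)
  subst hi
  have hd : d i = 0 := by
    ext x
    have hxa := le_of_mem_stanleyCone ha x
    have hxc := le_of_mem_stanleyCone hc x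
    simp only [Finsupp.single_apply] at hxa hxc
    split_ifs at hxa hxc <;> simp_all
  have h1 := (h.monomial_mem_iff 0).mpr ⟨i, hd ▸ zero_mem_stanleyCone_zero (Z i)⟩
  rw [monomial_zero', C_1] at h1
  exact hI ((Ideal.eq_top_iff_one I).mpr h1)

theorem exists_card_le {u : Fin s → MvPolynomial (Fin n) K} (h : IsStanleyDecomp I u Z)
    (hI : I ≠ ⊤) {T : Finset (Fin n)} (hT : T.Nonempty) (hTI : ∀ j ∈ T, X j ∈ I.radical) :
    ∃ i, #(Z i) ≤ n - #T / 2 := by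
  classical
  choose d hd using h.1
  obtain rfl : u = fun i => monomial (d i) 1 := funext hd
  choose! m hm using hTI
  have hcone : ∀ j ∈ T, ∃ i, Finsupp.single j (m j) ∈ stanleyCone (d i) (Z i) := fun j hj => by
    rw [← h.monomial_mem_iff, ← X_pow_eq_monomial]
    exact hm j hj
  let R a c := a ≠ c ∧ ∃ i, Finsupp.single a (m a) ∈ stanleyCone (d i) (Z i) ∧ c ∈ Z i
  have hR : ∀ a ∈ T, ∀ c ∈ T, R a c → ¬ R c a := by
    rintro a - c - ⟨hac, i, ha, hcZ⟩ ⟨-, i', hc, haZ⟩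
    exact h.notMem_of_single_mem_stanleyCone hI hac ha hc hcZ haZ
  obtain ⟨a, ha, hdeg⟩ := exists_two_mul_card_filter_le_of_asymm hT R hR
  obtain ⟨i, hai⟩ := hcone a ha
  refine ⟨i, ?_⟩
  have hinter : #(Z i ∩ T) ≤ #{c ∈ T | R a c} + 1 := by
    refine (card_le_card fun c hc => ?_).trans (card_insert_le a _)
    rw [mem_insert, mem_filter]
    by_cases hca : c = a
    · exact .inl hca
    · exact .inr ⟨(mem_inter.mp hc).2, Ne.symm hca, i, hai, (mem_inter.mp hc).1⟩
  have hdiff : #(Z i \ T) ≤ n - #T := by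
    calc #(Z i \ T) ≤ #(univ \ T) := card_le_card (sdiff_subset_sdiff (subset_univ _) le_rfl)
      _ = n - #T := by rw [card_univ_sdiff, Fintype.card_fin]
  have hTn : #T ≤ n := by simpa using card_le_univ T
  have hsplit := card_inter_add_card_sdiff (Z i) T
  have := hT.card_pos
  omega

end IsStanleyDecomp

theorem sdepth_le_of_forall_X_mem_radical {I : Ideal (MvPolynomial (Fin n) K)} (hI : I ≠ ⊤)
    {T : Finset (Fin n)} (hT : T.Nonempty) (hTI : ∀ j ∈ T, X j ∈ I.radical) :
    sdepth I ≤ n - #T / 2 := by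
  refine csSup_le' ?_
  rintro k ⟨s, u, Z, h, hk⟩
  obtain ⟨i, hi⟩ := h.exists_card_le hI hT hTI
  exact (hk i).trans hi

theorem sdepth_inter_le_of_radical_subset_general {n t : ℕ} (ht1 : 1 ≤ t) (htn : t ≤ n)
    (Q Q' : Ideal (MvPolynomial (Fin n) K))
    (hQp : Q.IsPrimary)
    (hQr : Q.radical =
      Ideal.span ((fun i => (X i : MvPolynomial (Fin n) K)) '' {i | (i : ℕ) < t}))
    (hQ'r : Q'.radical = Ideal.span (Set.range (X : Fin n → MvPolynomial (Fin n) K))) :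
    sdepth (Q ⊓ Q') ≤ n - t / 2 := by
  have hT : #{i : Fin n | (i : ℕ) < t} = t := by
    rw [Fin.card_filter_val_lt, min_eq_right htn]
  have hI : Q ⊓ Q' ≠ ⊤ := fun h => hQp.ne_top (inf_eq_top_iff.mp h).1
  have hTI : ∀ j ∈ ({i : Fin n | (i : ℕ) < t} : Finset (Fin n)), X j ∈ (Q ⊓ Q').radical := by
    intro j hj
    rw [Ideal.radical_inf, hQr, hQ'r]
    exact ⟨Ideal.subset_span ⟨j, by simpa using hj, rfl⟩, Ideal.subset_span ⟨j, rfl⟩⟩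
  simpa only [hT] using sdepth_le_of_forall_X_mem_radical hI
    ⟨⟨0, by omega⟩, mem_filter.mpr ⟨mem_univ _, ht1⟩⟩ hTI

/-- If `Q, Q'` are monomial primary ideals with `√Q = (x_1,…,x_t)` and
`√Q' = (x_1,…,x_n)`, `1 ≤ t ≤ n`, then `sdepth(Q ∩ Q') ≤ n − ⌊t/2⌋`. -/
theorem sdepth_inter_le_of_radical_subset {n t : ℕ} (ht1 : 1 ≤ t) (htn : t ≤ n)
    (Q Q' : Ideal (MvPolynomial (Fin n) K))
    (hQm : IsMonomialIdeal Q) (hQ'm : IsMonomialIdeal Q')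
    (hQp : Q.IsPrimary) (hQ'p : Q'.IsPrimary)
    (hQr : Q.radical =
      Ideal.span ((fun i => (X i : MvPolynomial (Fin n) K)) '' {i | (i : ℕ) < t}))
    (hQ'r : Q'.radical = Ideal.span (Set.range (X : Fin n → MvPolynomial (Fin n) K))) :
    sdepth (Q ⊓ Q') ≤ n - t / 2 :=
  sdepth_inter_le_of_radical_subset_general ht1 htn Q Q' hQp hQr hQ'r
end
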